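/- In the right half-plane K = {w ∈ ℂ : Re w > 0} with hyperbolic metric ρ, let a = 1, f_n(w) = w + 1/n², and z_n = 1/n for n = 1, 2, …. Then exp(ρ(z_n, a)) = n, and there exists a constant λ > 1 such that for all n: (1/λ)·(1/n) ≤ ρ(f_n(z_n), z_n) ≤ λ·(1/n), (1/λ)·(1/n²) ≤ ρ(f_n(a), a) ≤ λ·(1/n²), and consequently (1/λ²)·exp(ρ(z_n,a)) ≤ ρ(f_n(z_n), z_n)/ρ(f_n(a), a) ≤ λ²·exp(ρ(z_n,a)). -/

import Mathlib

/-!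
On the positive real axis the hyperbolic distance is `ρ(u, v) = |log (v / u)|`, so the three
distances in question are `log n`, `log (1 + 1/n)` and `log (1 + 1/n²)`. Since
`x / 2 ≤ log (1 + x) ≤ x` for `0 ≤ x ≤ 1`, the comparisons hold with `λ = 2`.
-/

open Complex Metric Set

/-- The hyperbolic metric on the open right half-plane `{w : Re w > 0}`:
`ρ(u,v) = 2 · arsinh (|u − v| / (2·√(Re u · Re v)))`. -/
noncomputable def rhoK (u v : ℂ) : ℝ :=
  2 * Real.arsinh (‖u - v‖ / (2 * Real.sqrt (u.re * v.re)))

lemma rhoK_comm (u v : ℂ) : rhoK u v = rhoK v u := by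
  rw [rhoK, rhoK, norm_sub_rev, mul_comm u.re]

-- With `r = √(v/u)`, the argument of `arsinh` is `(r - r⁻¹) / 2 = sinh (log r)`.
lemma rhoK_ofReal_of_le {u v : ℝ} (hu : 0 < u) (huv : u ≤ v) :
    rhoK u v = Real.log (v / u) := by
  have hv : 0 < v := hu.trans_le huv
  set r := √(v / u)
  have hr : 0 < r := Real.sqrt_pos.2 (div_pos hv hu)
  have hr2 : r ^ 2 = v / u := Real.sq_sqrt (div_pos hv hu).le
  have hv_eq : v = u * r ^ 2 := by rw [hr2]; field_simp
  have hsqrt : √(u * v) = u * r := by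
    rw [hv_eq, show u * (u * r ^ 2) = (u * r) ^ 2 by ring, Real.sqrt_sq (by positivity)]
  have harg :
      ‖(u : ℂ) - v‖ / (2 * √((u : ℂ).re * (v : ℂ).re)) = Real.sinh (Real.log r) := by
    rw [Real.sinh_log hr, ofReal_re, ofReal_re, hsqrt, ← ofReal_sub, norm_real, Real.norm_eq_abs,
      abs_sub_comm, abs_of_nonneg (sub_nonneg.2 huv), hv_eq]
    field_simp
  rw [rhoK, harg, Real.arsinh_sinh, ← hr2, Real.log_pow]
  push_cast
  ring

lemma log_one_add_mem_Icc {x : ℝ} (hx0 : 0 ≤ x) (hx1 : x ≤ 1) :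
    1 / 2 * x ≤ Real.log (1 + x) ∧ Real.log (1 + x) ≤ 2 * x := by
  constructor
  · calc 1 / 2 * x ≤ 2 * x / (x + 2) := by
          rw [le_div_iff₀ (by linarith)]; nlinarith
      _ ≤ Real.log (1 + x) := Real.le_log_one_add_of_nonneg hx0
  · linarith [Real.log_le_sub_one_of_pos (by linarith : 0 < 1 + x)]

lemma div_mem_Icc_of_comparable {lam a b A B : ℝ} (hlam : 0 < lam) (ha : 0 ≤ a) (hb : 0 < b)
    (hA : 1 / lam * a ≤ A ∧ A ≤ lam * a) (hB : 1 / lam * b ≤ B ∧ B ≤ lam * b) :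
    1 / lam ^ 2 * (a / b) ≤ A / B ∧ A / B ≤ lam ^ 2 * (a / b) := by
  have hB0 : 0 < B := lt_of_lt_of_le (by positivity) hB.1
  constructor
  · calc 1 / lam ^ 2 * (a / b) = (1 / lam * a) / (lam * b) := by field_simp
      _ ≤ A / B := div_le_div₀ (hA.1.trans' (by positivity)) hA.1 hB0 hB.2
  · calc A / B ≤ (lam * a) / (1 / lam * b) :=
          div_le_div₀ (by positivity) hA.2 (by positivity) hB.1
      _ = lam ^ 2 * (a / b) := by field_simp

/-- In the right half-plane, with `a = 1`, `fₙ(w) = w + 1/n²` and `zₙ = 1/n`: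
`exp(ρ(zₙ,a)) = n`, and there is `λ > 1` with
`ρ(fₙ(zₙ),zₙ) ∼ 1/n`, `ρ(fₙ(a),a) ∼ 1/n²`, whence the ratio of the two
displacements is comparable to `exp(ρ(zₙ,a)) = n`. -/
theorem half_plane_example :
    (∀ n : ℕ, 1 ≤ n → Real.exp (rhoK ((1 : ℂ) / n) 1) = n) ∧
    ∃ lam : ℝ, 1 < lam ∧ ∀ n : ℕ, 1 ≤ n →
      ((1 / lam) * (1 / n) ≤ rhoK ((1 : ℂ) / n + 1 / n ^ 2) ((1 : ℂ) / n) ∧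
        rhoK ((1 : ℂ) / n + 1 / n ^ 2) ((1 : ℂ) / n) ≤ lam * (1 / n)) ∧
      ((1 / lam) * (1 / (n : ℝ) ^ 2) ≤ rhoK ((1 : ℂ) + 1 / n ^ 2) 1 ∧
        rhoK ((1 : ℂ) + 1 / n ^ 2) 1 ≤ lam * (1 / (n : ℝ) ^ 2)) ∧
      ((1 / lam ^ 2) * Real.exp (rhoK ((1 : ℂ) / n) 1) ≤
          rhoK ((1 : ℂ) / n + 1 / n ^ 2) ((1 : ℂ) / n) / rhoK ((1 : ℂ) + 1 / n ^ 2) 1 ∧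
        rhoK ((1 : ℂ) / n + 1 / n ^ 2) ((1 : ℂ) / n) / rhoK ((1 : ℂ) + 1 / n ^ 2) 1 ≤
          lam ^ 2 * Real.exp (rhoK ((1 : ℂ) / n) 1)) := by
  have hexp : ∀ n : ℕ, 1 ≤ n → Real.exp (rhoK ((1 : ℂ) / n) 1) = n := by
    intro n hn
    have hn0 : (0 : ℝ) < n := by exact_mod_cast hn
    have h := rhoK_ofReal_of_le (one_div_pos.2 hn0)
      (div_le_one_of_le₀ (by exact_mod_cast hn) hn0.le)
    push_cast at h
    rw [h, one_div_one_div, Real.exp_log hn0]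
  refine ⟨hexp, 2, one_lt_two, fun n hn => ?_⟩
  have hn0 : (0 : ℝ) < n := by exact_mod_cast hn
  have hinv : 1 / (n : ℝ) ≤ 1 := div_le_one_of_le₀ (by exact_mod_cast hn) hn0.le
  have hinv2 : 1 / (n : ℝ) ^ 2 ≤ 1 :=
    div_le_one_of_le₀ (one_le_pow₀ (by exact_mod_cast hn)) (by positivity)
  have hfz : rhoK ((1 : ℂ) / n + 1 / n ^ 2) ((1 : ℂ) / n) = Real.log (1 + 1 / n) := by
    have h := rhoK_ofReal_of_le (u := 1 / n) (v := 1 / n + 1 / n ^ 2) (by positivity) (by simp)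
    push_cast at h
    rw [rhoK_comm, h]
    congr 1
    field_simp
  have hfa : rhoK ((1 : ℂ) + 1 / n ^ 2) 1 = Real.log (1 + 1 / n ^ 2) := by
    have h := rhoK_ofReal_of_le (u := 1) (v := 1 + 1 / n ^ 2) one_pos (by simp)
    push_cast at h
    rw [rhoK_comm, h, div_one]
  have hA := log_one_add_mem_Icc (by positivity) hinv
  have hB := log_one_add_mem_Icc (by positivity) hinv2
  have hratio := div_mem_Icc_of_comparable two_pos (by positivity) (by positivity) hA hB
  rw [show (1 / (n : ℝ)) / (1 / n ^ 2) = n by field_simp] at hratio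
  rw [hfz, hfa, hexp n hn]
  exact ⟨hA, hB, hratio⟩
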